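/- Suppose that for every choice of finite-dimensional complex Hilbert spaces H₁, H₂, H₁', H₂' and every state σ on (H₁⊗H₂) ⊗ (H₁'⊗H₂') one has E_m(σ) ≥ E_m(tr_{H₁'⊗H₂'} σ) + E_m(tr_{H₁⊗H₂} σ) (with E_m computed across the 1–2 cuts). Then for all states ρ on H₁ ⊗ H₂ and ρ' on H₁' ⊗ H₂', E_m(ρ ⊗ ρ') = E_m(ρ) + E_m(ρ'), where E_m of ρ ⊗ ρ' is computed across the (H₁⊗H₁')–(H₂⊗H₂') cut. -/

import Mathlib

/-!
Strong superadditivity applied to `σ = ρ ⊗ ρ'`, whose partial traces are `ρ` and `ρ'`, gives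
`E_m(ρ ⊗ ρ') ≥ E_m(ρ) + E_m(ρ')`. For the reverse inequality, tensor a pure-state ensemble
`{pᵢ, πᵢ}` of `ρ` with one `{qⱼ, π'ⱼ}` of `ρ'`: this is an ensemble `{pᵢ qⱼ, πᵢ ⊗ π'ⱼ}` of
`ρ ⊗ ρ'`. The reduced state of `πᵢ ⊗ π'ⱼ` is the tensor product of the reduced states, and von
Neumann entropy is additive on tensor products, so `E(πᵢ ⊗ π'ⱼ) = E(πᵢ) + E(π'ⱼ)`; hence the
least entanglement in the product ensemble is the sum of the two minima. Taking infima over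
ensembles (which exist: the spectral decomposition of a state restricted to its positive
eigenvalues is one) gives `E_m(ρ ⊗ ρ') ≤ E_m(ρ) + E_m(ρ')`.
-/

open Matrix Kronecker BigOperators ComplexOrder

noncomputable section

namespace QAdditivity

/-- von Neumann entropy of a matrix (junk value `0` if not Hermitian):
`S(ρ) = -∑ᵢ λᵢ log λᵢ` over the eigenvalues of `ρ`. -/
def entropy {ι : Type} [Fintype ι] [DecidableEq ι] (ρ : Matrix ι ι ℂ) : ℝ :=
  if h : ρ.IsHermitian then ∑ i, Real.negMulLog (h.eigenvalues i) else 0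

/-- A state: positive semidefinite with trace one. -/
def IsState {ι : Type} [Fintype ι] (ρ : Matrix ι ι ℂ) : Prop :=
  ρ.PosSemidef ∧ ρ.trace = 1

/-- A pure state: rank-one state, i.e. `|φ⟩⟨φ|` for a unit vector `φ`. -/
def IsPureState {ι : Type} [Fintype ι] (ρ : Matrix ι ι ℂ) : Prop :=
  ∃ φ : ι → ℂ, star φ ⬝ᵥ φ = 1 ∧ ρ = vecMulVec φ (star φ)

/-- Partial trace over the second tensor factor. -/
def trRight {ι κ : Type} [Fintype ι] [Fintype κ]
    (ρ : Matrix (ι × κ) (ι × κ) ℂ) : Matrix ι ι ℂ :=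
  Matrix.of fun i j => ∑ k, ρ (i, k) (j, k)

/-- Partial trace over the first tensor factor. -/
def trLeft {ι κ : Type} [Fintype ι] [Fintype κ]
    (ρ : Matrix (ι × κ) (ι × κ) ℂ) : Matrix κ κ ℂ :=
  Matrix.of fun k l => ∑ i, ρ (i, k) (i, l)

/-- Entanglement of a (pure) bipartite state: `E(π) = S(tr_{H₂} π)`. -/
def pureEnt {ι κ : Type} [Fintype ι] [Fintype κ] [DecidableEq ι]
    (π : Matrix (ι × κ) (ι × κ) ℂ) : ℝ :=
  entropy (trRight π)

/-- `E_m(ρ)`: minimum over finite pure-state ensembles for `ρ` of the minimal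
entanglement appearing in the ensemble. -/
def Em {ι κ : Type} [Fintype ι] [Fintype κ] [DecidableEq ι]
    (ρ : Matrix (ι × κ) (ι × κ) ℂ) : ℝ :=
  sInf { e : ℝ | ∃ (n : ℕ) (p : Fin (n + 1) → ℝ)
      (π : Fin (n + 1) → Matrix (ι × κ) (ι × κ) ℂ),
    (∀ i, 0 < p i) ∧ (∀ i, IsPureState (π i)) ∧
    (∑ i, (p i : ℂ) • π i) = ρ ∧
    e = Finset.univ.inf' Finset.univ_nonempty fun i => pureEnt (π i) }

/-- Entanglement of formation `E_f(ρ)`. -/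
def Ef {ι κ : Type} [Fintype ι] [Fintype κ] [DecidableEq ι]
    (ρ : Matrix (ι × κ) (ι × κ) ℂ) : ℝ :=
  sInf { e : ℝ | ∃ (n : ℕ) (p : Fin (n + 1) → ℝ)
      (π : Fin (n + 1) → Matrix (ι × κ) (ι × κ) ℂ),
    (∀ i, 0 < p i) ∧ (∀ i, IsPureState (π i)) ∧
    (∑ i, (p i : ℂ) • π i) = ρ ∧
    e = ∑ i, p i * pureEnt (π i) }

/-- Canonical reordering `(H₁⊗H₂)⊗(H₁'⊗H₂') ≃ (H₁⊗H₁')⊗(H₂⊗H₂')` on matrices. -/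
def reorder {a b a' b' : Type}
    (M : Matrix ((a × b) × (a' × b')) ((a × b) × (a' × b')) ℂ) :
    Matrix ((a × a') × (b × b')) ((a × a') × (b × b')) ℂ :=
  Matrix.reindex (Equiv.prodProdProdComm a b a' b') (Equiv.prodProdProdComm a b a' b') M

/-- Complete positivity of a superoperator. -/
def IsCompletelyPositive {κ η : Type} [Fintype κ] [Fintype η]
    (f : Matrix κ κ ℂ → Matrix η η ℂ) : Prop :=
  ∀ (n : ℕ) (M : Matrix (κ × Fin n) (κ × Fin n) ℂ), M.PosSemidef →
    Matrix.PosSemidef (Matrix.of fun p q : η × Fin n =>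
      f (Matrix.of fun a b => M (a, p.2) (b, q.2)) p.1 q.1)

/-- A quantum channel: a completely positive trace preserving linear map. -/
def IsChannel {κ η : Type} [Fintype κ] [Fintype η]
    (f : Matrix κ κ ℂ → Matrix η η ℂ) : Prop :=
  IsLinearMap ℂ f ∧ IsCompletelyPositive f ∧ ∀ M, (f M).trace = M.trace

/-- Minimum output entropy of a channel. -/
def Smin {κ η : Type} [Fintype κ] [Fintype η] [DecidableEq η]
    (f : Matrix κ κ ℂ → Matrix η η ℂ) : ℝ :=
  sInf { e : ℝ | ∃ ρ : Matrix κ κ ℂ, IsState ρ ∧ e = entropy (f ρ) }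

/-- The tensor product `Λ ⊗ Λ'` of two superoperators (defined on all of
`B(K ⊗ K')` by linearity via matrix units). -/
def tensorChannel {κ η κ' η' : Type} [Fintype κ] [Fintype κ']
    [DecidableEq κ] [DecidableEq κ']
    (f : Matrix κ κ ℂ → Matrix η η ℂ) (g : Matrix κ' κ' ℂ → Matrix η' η' ℂ) :
    Matrix (κ × κ') (κ × κ') ℂ → Matrix (η × η') (η × η') ℂ :=
  fun M => Matrix.of fun p q =>
    ∑ a, ∑ b, ∑ a', ∑ b', M (a, a') (b, b') *
      f (Matrix.single a b 1) p.1 q.1 *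
      g (Matrix.single a' b' 1) p.2 q.2

/-- Support of an operator: its range. -/
def supp {ι : Type} [Fintype ι] (ρ : Matrix ι ι ℂ) : Submodule ℂ (ι → ℂ) :=
  LinearMap.range ρ.mulVecLin

end QAdditivity

namespace Matrix

open Polynomial

variable {𝕜 : Type*} [RCLike 𝕜] {n m : Type*} [Fintype n] [DecidableEq n] [Fintype m]
  {A : Matrix n n 𝕜} {B : Matrix m m 𝕜}

lemma IsHermitian.sum_comp_eigenvalues_eq_of_charpoly_eq (hA : A.IsHermitian) {μ : m → ℝ}
    (h : A.charpoly = ∏ j, (X - C (μ j : 𝕜))) (f : ℝ → ℝ) :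
    ∑ i, f (hA.eigenvalues i) = ∑ j, f (μ j) := by
  have hroots : Finset.univ.val.map (RCLike.ofReal ∘ hA.eigenvalues)
      = Finset.univ.val.map (RCLike.ofReal ∘ μ : m → 𝕜) := by
    rw [← hA.roots_charpoly_eq_eigenvalues, h, roots_prod _ _ (by
      simp [Finset.prod_ne_zero_iff, X_sub_C_ne_zero])]
    simp
  have hmap : Finset.univ.val.map hA.eigenvalues = Finset.univ.val.map μ := by
    rw [← Multiset.map_map, ← Multiset.map_map] at hroots
    exact Multiset.map_injective RCLike.ofReal_injective hroots
  calc ∑ i, f (hA.eigenvalues i) = ((Finset.univ.val.map hA.eigenvalues).map f).sum := by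
        rw [Multiset.map_map]; rfl
    _ = ∑ j, f (μ j) := by rw [hmap, Multiset.map_map]; rfl

lemma IsHermitian.charpoly_kronecker [DecidableEq m] (hA : A.IsHermitian) (hB : B.IsHermitian) :
    (A ⊗ₖ B).charpoly
      = ∏ p : n × m, (X - C ((hA.eigenvalues p.1 * hB.eigenvalues p.2 : ℝ) : 𝕜)) := by
  conv_lhs => rw [hA.spectral_theorem, hB.spectral_theorem, Unitary.conjStarAlgAut_apply,
    Unitary.conjStarAlgAut_apply, mul_kronecker_mul, mul_kronecker_mul, charpoly_mul_comm,
    ← Matrix.mul_assoc, ← mul_kronecker_mul, Unitary.coe_star_mul_self,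
    Unitary.coe_star_mul_self, one_kronecker_one, Matrix.one_mul, diagonal_kronecker_diagonal,
    charpoly_diagonal]
  simp

lemma IsHermitian.eq_sum_eigenvalues_smul_vecMulVec (hA : A.IsHermitian) :
    A = ∑ i, (hA.eigenvalues i : 𝕜) •
      vecMulVec ⇑(hA.eigenvectorBasis i) (star ⇑(hA.eigenvectorBasis i)) := by
  conv_lhs => rw [hA.spectral_theorem, Unitary.conjStarAlgAut_apply]
  ext x y
  simp only [mul_apply, diagonal_apply, Matrix.sum_apply, Matrix.smul_apply, vecMulVec_apply,
    mul_ite, mul_zero, Finset.sum_ite_eq', Finset.mem_univ, if_true, star_apply,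
    eigenvectorUnitary_apply, Function.comp_apply, smul_eq_mul, Pi.star_apply]
  exact Finset.sum_congr rfl fun j _ => by ring

lemma IsHermitian.sum_eigenvalues_eq_one (hA : A.IsHermitian)
    (htr : A.trace = 1) : ∑ i, hA.eigenvalues i = 1 := by
  have h := hA.trace_eq_sum_eigenvalues
  rw [htr, ← RCLike.ofReal_sum] at h
  exact_mod_cast h.symm

lemma PosSemidef.exists_eigenvalues_pos (hA : A.PosSemidef) (h : A ≠ 0) :
    ∃ i, 0 < hA.isHermitian.eigenvalues i := by
  obtain ⟨i, hi⟩ := Function.ne_iff.mp (mt hA.isHermitian.eigenvalues_eq_zero_iff.mp h)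
  exact ⟨i, (hA.eigenvalues_nonneg i).lt_of_ne' hi⟩

end Matrix

namespace Finset

lemma inf'_univ_fst_add_snd {α β M : Type*} [Fintype α] [Fintype β] [Nonempty α] [Nonempty β]
    [LinearOrder M] [Add M] [AddLeftMono M] [AddRightMono M] (f : α → M) (g : β → M) :
    univ.inf' univ_nonempty (fun x : α × β => f x.1 + g x.2)
      = univ.inf' univ_nonempty f + univ.inf' univ_nonempty g := by
  refine le_antisymm ?_ (le_inf' _ _ fun x _ => add_le_add (inf'_le _ (mem_univ _))
    (inf'_le _ (mem_univ _)))
  obtain ⟨i, -, hi⟩ := exists_mem_eq_inf' univ_nonempty f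
  obtain ⟨j, -, hj⟩ := exists_mem_eq_inf' univ_nonempty g
  rw [hi, hj]
  exact inf'_le (fun x : α × β => f x.1 + g x.2) (mem_univ (i, j))

end Finset

namespace QAdditivity

section PartialTrace

variable {ι κ : Type} [Fintype ι] [Fintype κ]

lemma trRight_eq_sum_submatrix (ρ : Matrix (ι × κ) (ι × κ) ℂ) :
    trRight ρ = ∑ k, ρ.submatrix (·, k) (·, k) := by
  ext i j
  simp [trRight, Matrix.sum_apply]

lemma trace_trRight (ρ : Matrix (ι × κ) (ι × κ) ℂ) : (trRight ρ).trace = ρ.trace := by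
  simp [trRight, Matrix.trace, Fintype.sum_prod_type]

lemma IsState.trRight {ρ : Matrix (ι × κ) (ι × κ) ℂ} (hρ : IsState ρ) :
    IsState (trRight ρ) :=
  ⟨trRight_eq_sum_submatrix ρ ▸ posSemidef_sum _ fun _ _ => hρ.1.submatrix _,
    (trace_trRight ρ).trans hρ.2⟩

lemma trRight_kronecker (A : Matrix ι ι ℂ) {B : Matrix κ κ ℂ} (hB : B.trace = 1) :
    trRight (A ⊗ₖ B) = A := by
  ext i j
  simp only [trRight, of_apply, kroneckerMap_apply, ← Finset.mul_sum]
  rw [show ∑ k, B k k = 1 from hB, mul_one]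

lemma trLeft_kronecker {A : Matrix ι ι ℂ} (hA : A.trace = 1) (B : Matrix κ κ ℂ) :
    trLeft (A ⊗ₖ B) = B := by
  ext k l
  simp only [trLeft, of_apply, kroneckerMap_apply, ← Finset.sum_mul]
  rw [show ∑ i, A i i = 1 from hA, one_mul]

lemma trRight_reorder_kronecker {a b a' b' : Type} [Fintype a] [Fintype b] [Fintype a']
    [Fintype b'] (π : Matrix (a × b) (a × b) ℂ) (π' : Matrix (a' × b') (a' × b') ℂ) :
    trRight (reorder (π ⊗ₖ π')) = trRight π ⊗ₖ trRight π' := by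
  ext ⟨i, i'⟩ ⟨j, j'⟩
  simp only [trRight, of_apply, kroneckerMap_apply, Finset.sum_mul_sum, Fintype.sum_prod_type]
  rfl

end PartialTrace

section States

variable {ι κ : Type} [Fintype ι] [Fintype κ]

lemma IsState.kronecker {A : Matrix ι ι ℂ} {B : Matrix κ κ ℂ} (hA : IsState A)
    (hB : IsState B) : IsState (A ⊗ₖ B) :=
  ⟨hA.1.kronecker hB.1, by rw [trace_kronecker, hA.2, hB.2, one_mul]⟩

lemma IsPureState.isState {ρ : Matrix ι ι ℂ} (hρ : IsPureState ρ) : IsState ρ := by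
  obtain ⟨φ, hφ, rfl⟩ := hρ
  exact ⟨posSemidef_vecMulVec_self_star φ, by rw [trace_vecMulVec, dotProduct_comm, hφ]⟩

lemma IsPureState.kronecker {A : Matrix ι ι ℂ} {B : Matrix κ κ ℂ} (hA : IsPureState A)
    (hB : IsPureState B) : IsPureState (A ⊗ₖ B) := by
  obtain ⟨φ, hφ, rfl⟩ := hA
  obtain ⟨ψ, hψ, rfl⟩ := hB
  refine ⟨fun p => φ p.1 * ψ p.2, ?_, ?_⟩
  · calc _ = (star φ ⬝ᵥ φ) * (star ψ ⬝ᵥ ψ) := ?_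
      _ = 1 := by rw [hφ, hψ, one_mul]
    simp only [dotProduct, Pi.star_apply, star_mul', Finset.sum_mul_sum, Fintype.sum_prod_type]
    exact Finset.sum_congr rfl fun i _ => Finset.sum_congr rfl fun k _ => by ring
  · ext ⟨i, k⟩ ⟨j, l⟩
    simp only [kroneckerMap_apply, vecMulVec_apply, Pi.star_apply, star_mul']
    ring

lemma IsPureState.reindex {ι' : Type} [Fintype ι'] {ρ : Matrix ι ι ℂ} (hρ : IsPureState ρ)
    (e : ι ≃ ι') : IsPureState (reindex e e ρ) := by
  obtain ⟨φ, hφ, rfl⟩ := hρ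
  refine ⟨φ ∘ e.symm, ?_, ?_⟩
  · rw [← hφ]
    exact Fintype.sum_equiv e.symm _ _ fun _ => rfl
  · ext i j
    rfl

end States

section Entropy

variable {ι κ : Type} [Fintype ι] [DecidableEq ι] [Fintype κ] [DecidableEq κ]

lemma entropy_nonneg {ρ : Matrix ι ι ℂ} (hρ : IsState ρ) : 0 ≤ entropy ρ := by
  have hsum := hρ.1.isHermitian.sum_eigenvalues_eq_one hρ.2
  rw [entropy, dif_pos hρ.1.isHermitian]
  refine Finset.sum_nonneg fun i _ => Real.negMulLog_nonneg (hρ.1.eigenvalues_nonneg i) ?_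
  exact hsum ▸ Finset.single_le_sum (fun j _ => hρ.1.eigenvalues_nonneg j) (Finset.mem_univ i)

/-- The spectrum of `A ⊗ B` is `{λᵢ μⱼ}`, and `η(λμ) = μ η(λ) + λ η(μ)` for
`η = Real.negMulLog`. -/
lemma entropy_kronecker {A : Matrix ι ι ℂ} {B : Matrix κ κ ℂ} (hA : A.IsHermitian)
    (hB : B.IsHermitian) (htA : A.trace = 1) (htB : B.trace = 1) :
    entropy (A ⊗ₖ B) = entropy A + entropy B := by
  have hAB : (A ⊗ₖ B).IsHermitian := by
    rw [IsHermitian, conjTranspose_kronecker, hA.eq, hB.eq]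
  rw [entropy, dif_pos hAB, entropy, dif_pos hA, entropy, dif_pos hB,
    hAB.sum_comp_eigenvalues_eq_of_charpoly_eq (hA.charpoly_kronecker hB), Fintype.sum_prod_type]
  simp only [Real.negMulLog_mul, Finset.sum_add_distrib, ← Finset.sum_mul, ← Finset.mul_sum,
    hA.sum_eigenvalues_eq_one htA, hB.sum_eigenvalues_eq_one htB]
  ring

end Entropy

lemma pureEnt_nonneg {ι κ : Type} [Fintype ι] [Fintype κ] [DecidableEq ι]
    {π : Matrix (ι × κ) (ι × κ) ℂ} (hπ : IsState π) : 0 ≤ pureEnt π :=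
  entropy_nonneg hπ.trRight

lemma pureEnt_reorder_kronecker {a b a' b' : Type} [Fintype a] [Fintype b] [Fintype a']
    [Fintype b'] [DecidableEq a] [DecidableEq a'] {π : Matrix (a × b) (a × b) ℂ}
    {π' : Matrix (a' × b') (a' × b') ℂ} (hπ : IsState π) (hπ' : IsState π') :
    pureEnt (reorder (π ⊗ₖ π')) = pureEnt π + pureEnt π' := by
  rw [pureEnt, trRight_reorder_kronecker]
  exact entropy_kronecker hπ.trRight.1.isHermitian hπ'.trRight.1.isHermitian hπ.trRight.2
    hπ'.trRight.2

section Ensembles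

variable {ι : Type} [Fintype ι]

def IsEnsemble {X : Type} [Fintype X] (ρ : Matrix ι ι ℂ) (p : X → ℝ)
    (π : X → Matrix ι ι ℂ) : Prop :=
  (∀ x, 0 < p x) ∧ (∀ x, IsPureState (π x)) ∧ ∑ x, (p x : ℂ) • π x = ρ

lemma isEnsemble_eigenvectors [DecidableEq ι] {ρ : Matrix ι ι ℂ} (hρ : ρ.PosSemidef) :
    IsEnsemble ρ (fun i : {i // 0 < hρ.isHermitian.eigenvalues i} =>
        hρ.isHermitian.eigenvalues i)
      (fun i => vecMulVec ⇑(hρ.isHermitian.eigenvectorBasis i)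
        (star ⇑(hρ.isHermitian.eigenvectorBasis i))) := by
  refine ⟨fun i => i.2, fun i => ⟨_, ?_, rfl⟩, ?_⟩
  · rw [dotProduct_comm, ← EuclideanSpace.inner_eq_star_dotProduct, inner_self_eq_norm_sq_to_K,
      hρ.isHermitian.eigenvectorBasis.orthonormal.1 i]
    simp
  · conv_rhs => rw [hρ.isHermitian.eq_sum_eigenvalues_smul_vecMulVec]
    beta_reduce
    rw [← Finset.sum_subtype (Finset.univ.filter fun i => 0 < hρ.isHermitian.eigenvalues i)
      (by simp) fun i => (hρ.isHermitian.eigenvalues i : ℂ) •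
        vecMulVec ⇑(hρ.isHermitian.eigenvectorBasis i) (star ⇑(hρ.isHermitian.eigenvectorBasis i)),
      Finset.sum_filter_of_ne]
    · rfl -- `RCLike.ofReal` and `Complex.ofReal` agree only up to unfolding
    intro i _ hi
    refine (hρ.eigenvalues_nonneg i).lt_of_ne fun h => hi ?_
    rw [← h, Complex.ofReal_zero, zero_smul]

end Ensembles

section EmSet

variable {ι κ : Type} [Fintype ι] [Fintype κ] [DecidableEq ι]

def EmSet (ρ : Matrix (ι × κ) (ι × κ) ℂ) : Set ℝ :=
  { e | ∃ (n : ℕ) (p : Fin (n + 1) → ℝ) (π : Fin (n + 1) → Matrix (ι × κ) (ι × κ) ℂ),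
    IsEnsemble ρ p π ∧ e = Finset.univ.inf' Finset.univ_nonempty fun i => pureEnt (π i) }

lemma Em_eq_sInf_EmSet (ρ : Matrix (ι × κ) (ι × κ) ℂ) : Em ρ = sInf (EmSet ρ) := by
  simp only [Em, EmSet, IsEnsemble, and_assoc]

lemma IsEnsemble.inf'_pureEnt_mem_EmSet {X : Type} [Fintype X] [Nonempty X]
    {ρ : Matrix (ι × κ) (ι × κ) ℂ} {p : X → ℝ} {π : X → Matrix (ι × κ) (ι × κ) ℂ}
    (h : IsEnsemble ρ p π) :
    Finset.univ.inf' Finset.univ_nonempty (fun x => pureEnt (π x)) ∈ EmSet ρ := by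
  obtain ⟨n, hn⟩ := Nat.exists_eq_add_one_of_ne_zero (Fintype.card_ne_zero (α := X))
  set e := (Fintype.equivFinOfCardEq hn).symm
  refine ⟨n, p ∘ e, π ∘ e, ⟨fun i => h.1 _, fun i => h.2.1 _, ?_⟩, ?_⟩
  · rw [← h.2.2]
    exact Fintype.sum_equiv e _ _ fun _ => rfl
  · refine le_antisymm (Finset.le_inf' _ _ fun i _ => Finset.inf'_le _ (Finset.mem_univ _)) ?_
    refine Finset.le_inf' _ _ fun x _ => ?_
    calc _ ≤ pureEnt ((π ∘ e) (e.symm x)) :=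
          Finset.inf'_le (fun i => pureEnt ((π ∘ e) i)) (Finset.mem_univ _)
      _ = pureEnt (π x) := by simp

lemma EmSet_bddBelow (ρ : Matrix (ι × κ) (ι × κ) ℂ) : BddBelow (EmSet ρ) := by
  refine ⟨0, ?_⟩
  rintro _ ⟨n, p, π, hens, rfl⟩
  exact Finset.le_inf' _ _ fun i _ => pureEnt_nonneg (hens.2.1 i).isState

lemma EmSet_nonempty [DecidableEq κ] {ρ : Matrix (ι × κ) (ι × κ) ℂ} (hρ : IsState ρ) :
    (EmSet ρ).Nonempty := by
  obtain ⟨hpsd, htr⟩ := hρ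
  obtain ⟨i, hi⟩ := hpsd.exists_eigenvalues_pos (by rintro rfl; simp at htr)
  have : Nonempty {i // 0 < hpsd.isHermitian.eigenvalues i} := ⟨⟨i, hi⟩⟩
  exact ⟨_, (isEnsemble_eigenvectors hpsd).inf'_pureEnt_mem_EmSet⟩

end EmSet

section Additivity

open scoped Pointwise

variable {a b a' b' : Type} [Fintype a] [Fintype b] [Fintype a'] [Fintype b']
  {ρ : Matrix (a × b) (a × b) ℂ} {ρ' : Matrix (a' × b') (a' × b') ℂ}

lemma IsEnsemble.reorder_kronecker {X Y : Type} [Fintype X] [Fintype Y] {p : X → ℝ}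
    {q : Y → ℝ} {π : X → Matrix (a × b) (a × b) ℂ} {π' : Y → Matrix (a' × b') (a' × b') ℂ}
    (h : IsEnsemble ρ p π) (h' : IsEnsemble ρ' q π') :
    IsEnsemble (reorder (ρ ⊗ₖ ρ')) (fun x : X × Y => p x.1 * q x.2)
      (fun x => reorder (π x.1 ⊗ₖ π' x.2)) := by
  refine ⟨fun x => mul_pos (h.1 _) (h'.1 _), fun x => ((h.2.1 _).kronecker (h'.2.1 _)).reindex _,
    ?_⟩
  rw [← h.2.2, ← h'.2.2]
  ext ⟨⟨i, i'⟩, k, k'⟩ ⟨⟨j, j'⟩, l, l'⟩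
  simp only [reorder, reindex_apply, submatrix_apply, Equiv.prodProdProdComm_symm,
    Equiv.prodProdProdComm_apply, Matrix.sum_apply, Matrix.smul_apply, kroneckerMap_apply,
    Complex.ofReal_mul, smul_eq_mul, Finset.sum_mul_sum, Fintype.sum_prod_type]
  exact Finset.sum_congr rfl fun _ _ => Finset.sum_congr rfl fun _ _ => by ring

variable [DecidableEq a] [DecidableEq a']

lemma EmSet_add_subset : EmSet ρ + EmSet ρ' ⊆ EmSet (reorder (ρ ⊗ₖ ρ')) := by
  rw [Set.add_subset_iff]
  rintro _ ⟨n, p, π, h, rfl⟩ _ ⟨n', q, π', h', rfl⟩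
  have hmem := (h.reorder_kronecker h').inf'_pureEnt_mem_EmSet
  rw [Finset.inf'_congr _ rfl fun x _ =>
    pureEnt_reorder_kronecker (h.2.1 x.1).isState (h'.2.1 x.2).isState] at hmem
  rwa [← Finset.inf'_univ_fst_add_snd]

lemma Em_reorder_kronecker_le [DecidableEq b] [DecidableEq b'] (hρ : IsState ρ)
    (hρ' : IsState ρ') : Em (reorder (ρ ⊗ₖ ρ')) ≤ Em ρ + Em ρ' := by
  rw [Em_eq_sInf_EmSet, Em_eq_sInf_EmSet, Em_eq_sInf_EmSet, ← csInf_add (EmSet_nonempty hρ)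
    (EmSet_bddBelow ρ) (EmSet_nonempty hρ') (EmSet_bddBelow ρ')]
  exact csInf_le_csInf (EmSet_bddBelow _) ((EmSet_nonempty hρ).add (EmSet_nonempty hρ'))
    EmSet_add_subset

end Additivity

/-- (ii) ⟹ (iii): strong superadditivity of `E_m` (for all spaces and states)
implies additivity of `E_m`. -/
theorem Em_strong_superadditive_implies_Em_additive
    (hssa : ∀ (a b a' b' : Type) [Fintype a] [Fintype b] [Fintype a'] [Fintype b']
      [DecidableEq a] [DecidableEq b] [DecidableEq a'] [DecidableEq b'],
      ∀ σ : Matrix ((a × b) × (a' × b')) ((a × b) × (a' × b')) ℂ,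
        IsState σ →
        Em (reorder σ) ≥ Em (trRight σ) + Em (trLeft σ))
    {a b a' b' : Type} [Fintype a] [Fintype b] [Fintype a'] [Fintype b']
    [DecidableEq a] [DecidableEq b] [DecidableEq a'] [DecidableEq b']
    (ρ : Matrix (a × b) (a × b) ℂ) (ρ' : Matrix (a' × b') (a' × b') ℂ)
    (hρ : IsState ρ) (hρ' : IsState ρ') :
    Em (reorder (ρ ⊗ₖ ρ')) = Em ρ + Em ρ' := by
  refine le_antisymm (Em_reorder_kronecker_le hρ hρ') ?_
  have h := hssa a b a' b' (ρ ⊗ₖ ρ') (hρ.kronecker hρ')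
  rwa [trRight_kronecker ρ hρ'.2, trLeft_kronecker hρ.2 ρ'] at h

end QAdditivity
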